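/- arXiv:2505.02128 — 10 statements merged into one kernel-verified Lean document; each statement's English description precedes it below -/
import Mathlib

section
/- Let q = 2^m with m a positive integer, and let a, b ∈ F_q be nonzero with a ≠ b. Then f(X) = X^{2q^2} + a X^{q^2+q-1} + b X^{q^2-q+1} is not a permutation of F_{q^3}, because f(a+b) = 0 = f(0) while a + b ≠ 0. -/
/-! On the subfield fixed by `x ↦ x ^ q` the exponents `2q², q² + q - 1, q² - q + 1` collapse to
`2, 1, 1`, so `f x = x² + (a + b) x` there. The element `a + b` lies in that subfield, and in
characteristic two `f (a + b) = 2 (a + b)² = 0 = f 0`, while `a + b ≠ 0` because `a ≠ b`. -/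

section Trinomial

variable {K : Type*} [Field K]

/-- `X ^ (2q²) + a X ^ (q² + q - 1) + b X ^ (q² - q + 1)`, the two odd monomials encoded through
`⁻¹`; this agrees with the power map on `Kˣ`, and at `0` when `q ≠ 0`. -/
def frobTrinomial (q : ℕ) (a b x : K) : K :=
  x ^ (2 * q ^ 2) + a * (x ^ (q ^ 2) * x ^ q * x⁻¹) + b * (x ^ (q ^ 2) * x * (x ^ q)⁻¹)

theorem pow_sq_eq_self_of_pow_eq_self {q : ℕ} {x : K} (hx : x ^ q = x) : x ^ (q ^ 2) = x := by
  rw [sq, pow_mul, hx, hx]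

theorem frobTrinomial_of_pow_eq_self {q : ℕ} (a b : K) {x : K} (hx : x ^ q = x) :
    frobTrinomial q a b x = x ^ 2 + (a + b) * x := by
  have hx2 := pow_sq_eq_self_of_pow_eq_self hx
  rw [frobTrinomial, mul_comm 2, pow_mul, hx2, hx, mul_self_mul_inv]
  ring

theorem frobTrinomial_zero {q : ℕ} (hq : q ≠ 0) (a b : K) : frobTrinomial q a b 0 = 0 := by
  simp [frobTrinomial, hq]

end Trinomial

theorem stmt_3_general (m : ℕ) (F : Type*) [Field F] [Fintype F]
    (hF : Fintype.card F = (2^m)^3)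
    (a b : F) (haq : a^(2^m) = a) (hbq : b^(2^m) = b)
    (hab : a ≠ b)
    (f : F → F)
    (hf : ∀ x : F, f x = x^(2*(2^m)^2) + a * (x^((2^m)^2) * x^(2^m) * x⁻¹)
        + b * (x^((2^m)^2) * x * (x^(2^m))⁻¹)) :
    f (a + b) = 0 ∧ f 0 = 0 ∧ a + b ≠ 0 ∧ ¬ Function.Bijective f := by
  have hf : f = frobTrinomial (2 ^ m) a b := funext hf
  have : CharP F 2 := charP_of_card_eq_prime_pow (by rw [hF, ← pow_mul])
  have hsum_fixed : (a + b) ^ 2 ^ m = a + b := by rw [add_pow_char_pow, haq, hbq]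
  have hsum_ne : a + b ≠ 0 := fun h ↦ hab (CharTwo.add_eq_zero.mp h)
  have hf_sum : f (a + b) = 0 := by
    rw [hf, frobTrinomial_of_pow_eq_self a b hsum_fixed, sq, CharTwo.add_self_eq_zero]
  have hf_zero : f 0 = 0 := by rw [hf, frobTrinomial_zero (by positivity)]
  exact ⟨hf_sum, hf_zero, hsum_ne, fun hbij ↦ hsum_ne (hbij.injective (hf_sum.trans hf_zero.symm))⟩

theorem stmt_3 (m : ℕ) (hm : 0 < m) (F : Type*) [Field F] [Fintype F]
    (hF : Fintype.card F = (2^m)^3)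
    (a b : F) (haq : a^(2^m) = a) (hbq : b^(2^m) = b)
    (ha0 : a ≠ 0) (hb0 : b ≠ 0) (hab : a ≠ b)
    (f : F → F)
    (hf : ∀ x : F, f x = x^(2*(2^m)^2) + a * (x^((2^m)^2) * x^(2^m) * x⁻¹)
        + b * (x^((2^m)^2) * x * (x^(2^m))⁻¹)) :
    f (a + b) = 0 ∧ f 0 = 0 ∧ a + b ≠ 0 ∧ ¬ Function.Bijective f :=
  stmt_3_general m F hF a b haq hbq hab f hf
end

section
/- Let q = 2^m with m a positive integer, and let a, b ∈ F_q be nonzero with a ≠ b. Then f(X) = a X^{1+q} + b X^{1+q^2} + X^{2q^2+2q} is not a permutation of F_{q^3}: the element c = a^{1/2} + b^{1/2} (square roots in F_q) is nonzero and satisfies f(c) = 0 = f(0). -/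
/-! In characteristic 2 the square roots `s, t` of the `F_q`-elements `a, b` lie in `F_q` again,
so `c = s + t` is fixed by `x ↦ x^q` and every monomial of `f` collapses: `f c = (a + b + c²) c²`.
Since squaring is additive, `c² = a + b`, hence `f c = 0 = f 0`, while `c ≠ 0` because `s ≠ t`. -/

theorem charP_two_of_card_eq_two_pow {F : Type*} [Field F] [Fintype F] {n : ℕ}
    (hF : Fintype.card F = 2 ^ n) : CharP F 2 := by
  have h : (2 : F) ^ n = 0 := by exact_mod_cast hF ▸ FiniteField.cast_card_eq_zero F
  exact CharTwo.of_one_ne_zero_of_two_eq_zero one_ne_zero (pow_eq_zero_iff'.mp h).1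

theorem pow_eq_self_of_sq_pow_eq_self {R : Type*} [CommRing R] [CharP R 2] [NoZeroDivisors R]
    {s : R} {k : ℕ} (h : (s ^ 2) ^ k = s ^ 2) : s ^ k = s :=
  CharTwo.sq_injective (by simpa only [← pow_mul, mul_comm] using h)

theorem mul_pow_add_mul_pow_add_pow_of_pow_eq_self {R : Type*} [CommRing R] {q : ℕ} {c : R}
    (a b : R) (hc : c ^ q = c) :
    a * c ^ (1 + q) + b * c ^ (1 + q ^ 2) + c ^ (2 * q ^ 2 + 2 * q) = (a + b + c ^ 2) * c ^ 2 := by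
  have hc2 : c ^ q ^ 2 = c := by rw [sq, pow_mul, hc, hc]
  rw [pow_add, pow_add, pow_add, mul_comm 2, mul_comm 2, pow_mul, pow_mul, hc, hc2]
  ring

theorem stmt_5_general (m : ℕ) (F : Type*) [Field F] [Fintype F]
    (hF : Fintype.card F = (2^m)^3)
    (a b : F) (haq : a^(2^m) = a) (hbq : b^(2^m) = b)
    (hab : a ≠ b)
    (s t : F) (hs : s^2 = a) (ht : t^2 = b)
    (f : F → F)
    (hf : ∀ x : F, f x = a * x^(1 + 2^m) + b * x^(1 + (2^m)^2)
        + x^(2*(2^m)^2 + 2*2^m)) :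
    s + t ≠ 0 ∧ f (s + t) = 0 ∧ f 0 = 0 ∧ ¬ Function.Bijective f := by
  have : CharP F 2 := charP_two_of_card_eq_two_pow (hF.trans (pow_mul 2 m 3).symm)
  have hc0 : s + t ≠ 0 := by
    rw [Ne, CharTwo.add_eq_zero]
    rintro rfl
    exact hab (hs.symm.trans ht)
  have hcq : (s + t) ^ 2 ^ m = s + t := by
    rw [add_pow_char_pow, pow_eq_self_of_sq_pow_eq_self (hs ▸ haq),
      pow_eq_self_of_sq_pow_eq_self (ht ▸ hbq)]
  have hfc : f (s + t) = 0 := by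
    rw [hf, mul_pow_add_mul_pow_add_pow_of_pow_eq_self a b hcq, CharTwo.add_sq, hs, ht,
      CharTwo.add_self_eq_zero, zero_mul]
  have hf0 : f 0 = 0 := by simp [hf]
  exact ⟨hc0, hfc, hf0, fun hbij => hc0 (hbij.injective (hfc.trans hf0.symm))⟩

theorem stmt_5 (m : ℕ) (hm : 0 < m) (F : Type*) [Field F] [Fintype F]
    (hF : Fintype.card F = (2^m)^3)
    (a b : F) (haq : a^(2^m) = a) (hbq : b^(2^m) = b)
    (ha0 : a ≠ 0) (hb0 : b ≠ 0) (hab : a ≠ b)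
    (s t : F) (hs : s^2 = a) (ht : t^2 = b)
    (f : F → F)
    (hf : ∀ x : F, f x = a * x^(1 + 2^m) + b * x^(1 + (2^m)^2)
        + x^(2*(2^m)^2 + 2*2^m)) :
    s + t ≠ 0 ∧ f (s + t) = 0 ∧ f 0 = 0 ∧ ¬ Function.Bijective f :=
  stmt_5_general m F hF a b haq hbq hab s t hs ht f hf
end

section
/- Let q = 2^m with m a positive integer and a ∈ F_q nonzero. Then f(X) = a X^{1+q} + a X^{1+q^2} + X^{2q^2+2q} is a permutation polynomial of F_{q^3}. -/
/-!
Write `q = 2 ^ m` and `σ x = x ^ q`. In characteristic `2` one has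
`f x = L (x ^ (q + q ^ 2))` with `L w = w ^ 2 + a σ w + a σ² w`, which is additive.
The kernel of `L` is trivial: for `t = w + σ w + σ² w` (fixed by `σ`, since `σ³ = id`),
`L w = 0` says `w ^ 2 = a (w + t)`; summing this over its conjugates gives `t ^ 2 = 0`, so
`w ^ 2 = a w`, and `w = a` is impossible because then `t = 3 a = a ≠ 0`. Finally
`x ↦ x ^ (q + q ^ 2)` is injective since `q (q + 1)` is prime to `q ^ 3 - 1`.
-/

theorem pow_injective_of_coprime_card_units {G₀ : Type*} [GroupWithZero G₀] {n : ℕ}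
    (hn : n ≠ 0) (hcop : (Nat.card G₀ˣ).Coprime n) : Function.Injective (fun x : G₀ => x ^ n) := by
  intro x y (hxy : x ^ n = y ^ n)
  rcases eq_or_ne x 0 with rfl | hx
  · exact (pow_eq_zero_iff hn).mp (hxy.symm.trans (zero_pow hn)) |>.symm
  have hy : y ≠ 0 := by rintro rfl; exact pow_ne_zero n hx (hxy.trans (zero_pow hn))
  have := hcop.pow_left_bijective.injective (a₁ := Units.mk0 x hx) (a₂ := Units.mk0 y hy)
    (Units.ext (by simpa using hxy))
  exact congrArg Units.val this

theorem Int.isCoprime_pow_three_sub_one_add_sq_of_even {q : ℤ} (hq : Even q) :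
    IsCoprime (q ^ 3 - 1) (q + q ^ 2) := by
  obtain ⟨k, rfl⟩ := hq
  have hq : IsCoprime ((k + k) ^ 3 - 1) (k + k) := ⟨-1, (k + k) ^ 2, by ring⟩
  -- `q + 1` divides `q ^ 3 + 1 = (q ^ 3 - 1) + 2`, and `q ^ 3 - 1 = 8 k ^ 3 - 1` is odd
  have hq1 : IsCoprime ((k + k) ^ 3 - 1) (k + k + 1) :=
    ⟨-(4 * k ^ 3 + 1), 4 * k ^ 3 * ((k + k) ^ 2 - (k + k) + 1), by ring⟩
  convert hq.mul_right hq1 using 1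
  ring

theorem Nat.coprime_pow_three_sub_one_add_sq_of_even {q : ℕ} (hq : Even q) (hq0 : 0 < q) :
    (q ^ 3 - 1).Coprime (q + q ^ 2) := by
  rw [← Nat.isCoprime_iff_coprime]
  push_cast [Nat.one_le_pow _ _ hq0]
  exact Int.isCoprime_pow_three_sub_one_add_sq_of_even (by exact_mod_cast hq)

section CharTwo

variable {F : Type*} [Field F] [CharP F 2] (m : ℕ)

local notation "σ" => iterateFrobenius F 2 m

theorem iterateFrobenius_apply_three [Fintype F] (hF : Fintype.card F = (2 ^ m) ^ 3) (x : F) :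
    σ (σ (σ x)) = x := by
  simp only [iterateFrobenius_def, ← pow_mul]
  rw [← pow_three', ← hF, FiniteField.pow_card]

def frobLinearized (a : F) : F →+ F :=
  AddMonoidHom.mk' (fun w => w ^ 2 + a * σ w + a * σ (σ w)) fun u v => by
    simp only [map_add, add_pow_char]
    ring

variable {m}

theorem frobLinearized_apply (a w : F) :
    frobLinearized m a w = w ^ 2 + a * σ w + a * σ (σ w) := rfl

variable [Fintype F]

theorem frobLinearized_eq_zero (hF : Fintype.card F = (2 ^ m) ^ 3) {a : F} (hσa : σ a = a)
    (ha : a ≠ 0) {w : F} (hw : frobLinearized m a w = 0) : w = 0 := by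
  have h2 : (2 : F) = 0 := CharTwo.two_eq_zero
  set t := w + σ w + σ (σ w) with ht
  have hσt : σ t = t := by
    rw [ht, map_add, map_add, iterateFrobenius_apply_three m hF]
    ring
  rw [frobLinearized_apply] at hw
  have hw2 : w ^ 2 = a * t + a * w := by linear_combination hw - a * t * h2
  have hw2σ : σ w ^ 2 = a * t + a * σ w := by
    simpa only [map_pow, map_add, map_mul, hσa, hσt] using congrArg σ hw2
  have hw2σσ : σ (σ w) ^ 2 = a * t + a * σ (σ w) := by
    simpa only [map_pow, map_add, map_mul, hσa, hσt] using congrArg σ hw2σ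
  -- summing the three conjugates of `hw2` gives `t ^ 2 = 4 a t = 0`
  have ht0 : t = 0 := by
    refine pow_eq_zero_iff two_ne_zero |>.mp ?_
    linear_combination hw2 + hw2σ + hw2σσ
      + (w * σ w + w * σ (σ w) + σ w * σ (σ w) + 2 * a * t) * h2
  rw [ht0, mul_zero, zero_add] at hw2
  rcases mul_eq_zero.mp (show w * (w - a) = 0 by linear_combination hw2) with h | h
  · exact h
  · rw [sub_eq_zero.mp h, hσa, hσa] at ht
    exact absurd (by linear_combination ht0 - ht - a * h2) ha

theorem frobLinearized_injective (hF : Fintype.card F = (2 ^ m) ^ 3) {a : F} (hσa : σ a = a)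
    (ha : a ≠ 0) : Function.Injective (frobLinearized m a) :=
  (injective_iff_map_eq_zero _).mpr fun _ => frobLinearized_eq_zero hF hσa ha

theorem frobLinearized_pow (hF : Fintype.card F = (2 ^ m) ^ 3) (a x : F) :
    frobLinearized m a (x ^ (2 ^ m + (2 ^ m) ^ 2)) =
      a * x ^ (1 + 2 ^ m) + a * x ^ (1 + (2 ^ m) ^ 2) + x ^ (2 * (2 ^ m) ^ 2 + 2 * 2 ^ m) := by
  simp only [frobLinearized_apply, iterateFrobenius_def]
  set q := 2 ^ m
  have hx : x ^ q ^ 3 = x := hF ▸ FiniteField.pow_card x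
  have hx' : x ^ (q ^ 3 * q) = x ^ q := by rw [pow_mul, hx]
  simp only [← pow_mul]
  rw [show (q + q ^ 2) * q = q ^ 2 + q ^ 3 by ring,
    show (q ^ 2 + q ^ 3) * q = q ^ 3 + q ^ 3 * q by ring,
    show (q + q ^ 2) * 2 = 2 * q ^ 2 + 2 * q by ring]
  simp only [pow_add, hx, hx']
  ring

end CharTwo

theorem stmt_6 (m : ℕ) (hm : 0 < m) (F : Type*) [Field F] [Fintype F]
    (hF : Fintype.card F = (2^m)^3)
    (a : F) (haq : a^(2^m) = a) (ha0 : a ≠ 0) :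
    Function.Bijective (fun x : F =>
      a * x^(1 + 2^m) + a * x^(1 + (2^m)^2) + x^(2*(2^m)^2 + 2*2^m)) := by
  have : CharP F 2 := charP_of_card_eq_prime_pow (f := m * 3) (by rw [hF, pow_mul])
  have hpow : Function.Injective (fun x : F => x ^ (2 ^ m + (2 ^ m) ^ 2)) := by
    refine pow_injective_of_coprime_card_units (by positivity) ?_
    rw [Nat.card_units, Nat.card_eq_fintype_card, hF]
    exact Nat.coprime_pow_three_sub_one_add_sq_of_even
      (Nat.even_pow.mpr ⟨even_two, hm.ne'⟩) (by positivity)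
  rw [← Finite.injective_iff_bijective]
  convert (frobLinearized_injective hF haq ha0).comp hpow using 1
  funext x
  exact (frobLinearized_pow hF a x).symm
end

section
/- Let q = 2^m with m a positive integer. The map X ↦ X^{1+q} + X^{1+q^2} + X^{2q^2+2} is a permutation of F_{q^3} if and only if m is not congruent to 2 modulo 3. -/
/-!
Write `q = 2 ^ m`. Since `x ^ q ^ 3 = x`, the map is `L ∘ (x ↦ x ^ (q ^ 2 + 1))` with the additive
map `L b = b ^ q + b + b ^ 2`, and `x ↦ x ^ (q ^ 2 + 1)` is a permutation because
`gcd (q ^ 2 + 1, q ^ 3 - 1) = 1`. So everything hinges on the kernel of `L`. Iterating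
`b ^ q = b + b ^ 2` three times shows that a nonzero `b` in the kernel satisfies `b ^ 3 + b + 1 = 0`,
hence `b ^ 7 = 1` and `b ^ q = b ^ 2 ^ (m % 3)`; this is compatible with `L b = 0` exactly when
`m % 3 = 2`, and then any root of `X ^ 3 + X + 1`, which exists as `7 ∣ q ^ 3 - 1`, is in the kernel.
-/

open Function

lemma two_pow_mod_seven (m : ℕ) : 2 ^ m % 7 = 2 ^ (m % 3) % 7 := by
  conv_lhs => rw [← Nat.div_add_mod m 3, pow_add, pow_mul, Nat.mul_mod, Nat.pow_mod]
  norm_num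

lemma pow_two_pow_eq_pow_two_pow_mod_three {M : Type*} [Monoid M] {b : M} (hb : b ^ 7 = 1)
    (m : ℕ) : b ^ 2 ^ m = b ^ 2 ^ (m % 3) := by
  rw [pow_eq_pow_mod _ hb, two_pow_mod_seven, ← pow_eq_pow_mod _ hb]

lemma Nat.coprime_sq_add_one_pow_three_sub_one {q : ℕ} (hq : Even q) :
    Nat.Coprime (q ^ 2 + 1) (q ^ 3 - 1) := by
  obtain ⟨k, rfl⟩ := hq
  rcases k.eq_zero_or_pos with rfl | hk
  · simp
  rw [← Nat.isCoprime_iff_coprime, Nat.cast_sub (Nat.one_le_pow _ _ (by omega))]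
  refine ⟨4 * k ^ 3 - 2 * k ^ 2 + k, k - 2 * k ^ 2 - 1, ?_⟩
  push_cast
  ring

lemma FiniteField.pow_bijective_of_coprime {F : Type*} [Field F] [Fintype F] {n : ℕ}
    (hn : n ≠ 0) (h : n.Coprime (Fintype.card F - 1)) : Bijective fun x : F => x ^ n := by
  classical
  rw [← Finite.injective_iff_bijective]
  intro x y hxy
  simp only at hxy
  rcases eq_or_ne x 0 with rfl | hx
  · rw [zero_pow hn, eq_comm, pow_eq_zero_iff hn] at hxy
    exact hxy.symm
  rcases eq_or_ne y 0 with rfl | hy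
  · rwa [zero_pow hn, pow_eq_zero_iff hn] at hxy
  have hcard : (Nat.card Fˣ).Coprime n := by
    rwa [Nat.card_eq_fintype_card, Fintype.card_units, Nat.coprime_comm]
  have := (powCoprime hcard).injective (a₁ := Units.mk0 x hx) (a₂ := Units.mk0 y hy)
    (Units.ext <| by simpa [powCoprime_apply] using hxy)
  exact congrArg Units.val this

section CharTwo

variable {R : Type*} [CommRing R] [CharP R 2]

def linearizedTrinomial (R : Type*) [CommRing R] [CharP R 2] (m : ℕ) : R →+ R :=
  (iterateFrobenius R 2 m : R →+ R) + AddMonoidHom.id R + (frobenius R 2 : R →+ R)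

@[simp]
lemma linearizedTrinomial_apply (m : ℕ) (b : R) :
    linearizedTrinomial R m b = b ^ 2 ^ m + b + b ^ 2 := rfl

lemma linearizedTrinomial_pow_sq_add_one {m : ℕ} {x : R} (hx : x ^ (2 ^ m) ^ 3 = x) :
    linearizedTrinomial R m (x ^ ((2 ^ m) ^ 2 + 1)) =
      x ^ (1 + 2 ^ m) + x ^ (1 + (2 ^ m) ^ 2) + x ^ (2 * (2 ^ m) ^ 2 + 2) := by
  have hq : (x ^ ((2 ^ m) ^ 2 + 1)) ^ 2 ^ m = x ^ (1 + 2 ^ m) := by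
    rw [← pow_mul, show ((2 ^ m) ^ 2 + 1) * 2 ^ m = (2 ^ m) ^ 3 + 2 ^ m by ring, pow_add, hx,
      pow_add, pow_one]
  rw [linearizedTrinomial_apply, hq, ← pow_mul x, add_comm 1 ((2 ^ m) ^ 2)]
  ring_nf

lemma pow_seven_eq_one_of_cube_add_self_add_one {b : R} (hb : b ^ 3 + b + 1 = 0) :
    b ^ 7 = 1 := by
  linear_combination (b ^ 4 + b ^ 2 + b + 1) * hb -
    (b ^ 5 + b ^ 4 + b ^ 3 + b ^ 2 + b + 1) * CharTwo.two_eq_zero (R := R)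

end CharTwo

section Field

variable {F : Type*} [Field F] [CharP F 2]

lemma cube_add_self_add_one_eq_zero_of_linearizedTrinomial_eq_zero {m : ℕ} {b : F}
    (hb0 : b ≠ 0) (hfix : b ^ (2 ^ m) ^ 3 = b) (hb : linearizedTrinomial F m b = 0) :
    b ^ 3 + b + 1 = 0 := by
  have two : (2 : F) = 0 := CharTwo.two_eq_zero
  set φ := iterateFrobenius F 2 m
  have hφ : ∀ y, φ y = y ^ 2 ^ m := fun _ => rfl
  have h1 : φ b = b + b ^ 2 := by
    rw [linearizedTrinomial_apply] at hb
    rw [hφ]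
    linear_combination hb - (b + b ^ 2) * two
  have h2 : φ (φ b) = b + b ^ 4 := by
    rw [h1, map_add, map_pow, h1]
    linear_combination (b ^ 2 + b ^ 3) * two
  have h3 : φ (φ (φ b)) = b := by
    rw [hφ, hφ, hφ, ← pow_mul, ← pow_mul, ← mul_assoc, ← pow_three', hfix]
  rw [h2, map_add, map_pow, h1] at h3
  have hsq : (b + b ^ 2 + b ^ 4) ^ 2 = 0 := by
    linear_combination h3 + (b ^ 3 - b ^ 5 - 2 * b ^ 6 - 2 * b ^ 7) * two
  have hmul : b * (b ^ 3 + b + 1) = 0 := by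
    linear_combination pow_eq_zero_iff two_ne_zero |>.mp hsq
  exact (mul_eq_zero.mp hmul).resolve_left hb0

lemma linearizedTrinomial_injective {m : ℕ} (hfix : ∀ b : F, b ^ (2 ^ m) ^ 3 = b)
    (hm : m % 3 ≠ 2) : Injective (linearizedTrinomial F m) := by
  refine (injective_iff_map_eq_zero _).mpr fun b hb => ?_
  by_contra hb0
  have h7 := pow_seven_eq_one_of_cube_add_self_add_one
    (cube_add_self_add_one_eq_zero_of_linearizedTrinomial_eq_zero hb0 (hfix b) hb)
  rw [linearizedTrinomial_apply, pow_two_pow_eq_pow_two_pow_mod_three h7] at hb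
  have two : (2 : F) = 0 := CharTwo.two_eq_zero
  obtain h | h : m % 3 = 0 ∨ m % 3 = 1 := by omega
  · rw [h] at hb
    exact hb0 (pow_eq_zero_iff two_ne_zero |>.mp (by linear_combination hb - b * two))
  · rw [h] at hb
    exact hb0 (by linear_combination hb - b ^ 2 * two)

lemma linearizedTrinomial_eq_zero_of_cube_add_self_add_one {m : ℕ} (hm : m % 3 = 2) {b : F}
    (hb : b ^ 3 + b + 1 = 0) : linearizedTrinomial F m b = 0 := by
  rw [linearizedTrinomial_apply, pow_two_pow_eq_pow_two_pow_mod_three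
    (pow_seven_eq_one_of_cube_add_self_add_one hb), hm]
  linear_combination b * hb

lemma FiniteField.exists_cube_add_self_add_one_eq_zero [Fintype F]
    (h7 : 7 ∣ Fintype.card F - 1) : ∃ b : F, b ^ 3 + b + 1 = 0 := by
  classical
  have two : (2 : F) = 0 := CharTwo.two_eq_zero
  have : Fact (Nat.Prime 7) := ⟨by norm_num⟩
  obtain ⟨ζ, hζ⟩ := exists_prime_orderOf_dvd_card (G := Fˣ) 7 (by rwa [Fintype.card_units])
  have hc7 : (ζ : F) ^ 7 = 1 := by rw [← Units.val_pow_eq_pow_val, ← hζ, pow_orderOf_eq_one]; rfl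
  have hζ1 : (ζ : F) + 1 ≠ 0 := fun h => by
    have : ζ = 1 := Units.val_eq_one.mp (by linear_combination h - two)
    simp [this] at hζ
  have hfact : ((ζ : F) + 1) * (((ζ : F) ^ 3 + ζ + 1) * ((ζ : F) ^ 3 + (ζ : F) ^ 2 + 1)) = 0 := by
    linear_combination hc7 + ((ζ : F) ^ 6 + (ζ : F) ^ 5 + 2 * (ζ : F) ^ 4 + 2 * (ζ : F) ^ 3 +
      (ζ : F) ^ 2 + ζ + 1) * two
  rcases mul_eq_zero.mp ((mul_eq_zero.mp hfact).resolve_left hζ1) with h | h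
  · exact ⟨ζ, h⟩
  · -- `ζ ^ 6 = ζ⁻¹`, and inversion swaps the roots of `X ^ 3 + X ^ 2 + 1` and `X ^ 3 + X + 1`
    refine ⟨ζ ^ 6, ?_⟩
    linear_combination ((ζ : F) ^ 11 + (ζ : F) ^ 4) * hc7 + ((ζ : F) ^ 3 - (ζ : F) ^ 2 - 1) * h +
      ((ζ : F) ^ 4 + (ζ : F) ^ 2 + 1) * two

lemma linearizedTrinomial_not_injective [Fintype F] {m : ℕ} (hF : Fintype.card F = (2 ^ m) ^ 3)
    (hm : m % 3 = 2) : ¬ Injective (linearizedTrinomial F m) := by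
  have h7 : 7 ∣ Fintype.card F - 1 := by
    rw [hF, ← pow_mul, mul_comm, pow_mul]
    simpa using Nat.sub_dvd_pow_sub_pow 8 1 m
  obtain ⟨b, hb⟩ := FiniteField.exists_cube_add_self_add_one_eq_zero h7
  have hb0 : b ≠ 0 := by rintro rfl; norm_num at hb
  intro hinj
  exact hb0 (hinj ((linearizedTrinomial_eq_zero_of_cube_add_self_add_one hm hb).trans
    (map_zero _).symm))

end Field

theorem stmt_8 (m : ℕ) (hm : 0 < m) (F : Type*) [Field F] [Fintype F]
    (hF : Fintype.card F = (2^m)^3) :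
    Function.Bijective (fun x : F =>
      x^(1 + 2^m) + x^(1 + (2^m)^2) + x^(2*(2^m)^2 + 2)) ↔ m % 3 ≠ 2 := by
  have : Fact (Nat.Prime 2) := ⟨Nat.prime_two⟩
  have : CharP F 2 := charP_of_card_eq_prime_pow (hF.trans (pow_mul 2 m 3).symm)
  have hfix : ∀ x : F, x ^ (2 ^ m) ^ 3 = x := fun x => hF ▸ FiniteField.pow_card x
  have hfactor : (fun x : F => x^(1 + 2^m) + x^(1 + (2^m)^2) + x^(2*(2^m)^2 + 2)) =
      linearizedTrinomial F m ∘ fun x => x ^ ((2 ^ m) ^ 2 + 1) :=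
    funext fun x => (linearizedTrinomial_pow_sq_add_one (hfix x)).symm
  have hpow : Bijective fun x : F => x ^ ((2 ^ m) ^ 2 + 1) :=
    FiniteField.pow_bijective_of_coprime (by positivity) <| hF ▸
      Nat.coprime_sq_add_one_pow_three_sub_one (Nat.even_pow.mpr ⟨even_two, hm.ne'⟩)
  rw [hfactor, hpow.of_comp_iff, ← Finite.injective_iff_bijective]
  exact ⟨fun hinj hm3 => linearizedTrinomial_not_injective hF hm3 hinj,
    linearizedTrinomial_injective hfix⟩
end

section
/- Let n = 3m with m a positive integer not congruent to 1 modulo 3, and let ω be a primitive n-th root of unity in an algebraic closure of F_2. Then for every j with 0 ≤ j ≤ n-1, 1 + ω^j + ω^{2mj} ≠ 0. -/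
/-!
`ζ = ω ^ m` is a primitive cube root of unity and `ω ^ (2 * m * j) = ζ ^ (2 * j)`.
If `3 ∣ j` this is `1`, and `1 + ω ^ j + 1 = ω ^ j ≠ 0` in characteristic 2.
Otherwise `1 + ζ ^ j + ζ ^ (2 * j) = 0`, so a vanishing sum would force `ω ^ j = ζ ^ j = ω ^ (m * j)`,
i.e. `j ≡ m * j [MOD 3]`, which for `3 ∤ j` means `m ≡ 1 [MOD 3]`.
-/

theorem IsPrimitiveRoot.one_add_pow_add_pow_two_mul_eq_zero {R : Type*} [CommRing R] [IsDomain R]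
    {ζ : R} (hζ : IsPrimitiveRoot ζ 3) {j : ℕ} (hj : ¬ 3 ∣ j) : 1 + ζ ^ j + ζ ^ (2 * j) = 0 := by
  have hζj : IsPrimitiveRoot (ζ ^ j) 3 :=
    hζ.pow_of_coprime j (Nat.prime_three.coprime_iff_not_dvd.mpr hj).symm
  simpa [Finset.sum_range_succ, ← pow_mul, mul_comm] using hζj.geom_sum_eq_zero (by norm_num)

theorem Nat.not_modEq_mul_of_not_dvd {p m j : ℕ} (hp : p.Prime) (hm : ¬ m ≡ 1 [MOD p])
    (hj : ¬ p ∣ j) : ¬ j ≡ m * j [MOD p] := by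
  have := Fact.mk hp
  rw [← ZMod.natCast_eq_zero_iff] at hj
  rw [← ZMod.natCast_eq_natCast_iff, Nat.cast_one] at hm
  rw [← ZMod.natCast_eq_natCast_iff, Nat.cast_mul]
  intro h
  exact hm <| (mul_left_eq_self₀.mp h.symm).resolve_right hj

theorem stmt_11 (m : ℕ) (hm : 0 < m) (hm3 : m % 3 ≠ 1)
    (K : Type*) [Field K] [CharP K 2] (ω : K) (hω : orderOf ω = 3 * m) :
    ∀ j : ℕ, j ≤ 3 * m - 1 → 1 + ω^j + ω^(2*m*j) ≠ 0 := by
  intro j _ h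
  have hn : 0 < 3 * m := by omega
  have hω' : IsPrimitiveRoot ω (3 * m) := hω ▸ IsPrimitiveRoot.orderOf ω
  have hζ : IsPrimitiveRoot (ω ^ m) 3 := hω'.pow hn (mul_comm 3 m)
  rw [show 2 * m * j = m * (2 * j) by ring, pow_mul] at h
  by_cases h3 : 3 ∣ j
  · rw [(hζ.pow_eq_one_iff_dvd _).mpr (h3.mul_left 2), add_comm, ← add_assoc,
      CharTwo.add_self_eq_zero, zero_add] at h
    exact pow_ne_zero j (hω'.ne_zero hn.ne') h
  · have hpow : ω ^ j = ω ^ (m * j) := by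
      rw [pow_mul]
      linear_combination h - hζ.one_add_pow_add_pow_two_mul_eq_zero h3
    rw [(orderOf_pos_iff.mp (hω ▸ hn)).pow_eq_pow_iff_modEq, hω] at hpow
    exact Nat.not_modEq_mul_of_not_dvd Nat.prime_three hm3 h3 (hpow.of_mul_right m)
end

section
/- Let q = p^m with p an odd prime, and let A ∈ F_{q^3}. For X ∈ F_{q^3}, writing f_5(X) = 2X^{q^2} + X^{q^2-q+1} + X^{q^2+q-1} (interpreted for X ≠ 0; f_5(0)=0), one has the identity f_5(X)^{q^2+1} = (X + X^q + X^{q^2} + X^{q^2+q-1})^2 for all nonzero X ∈ F_{q^3}. -/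
/-!
Write `q = p ^ m`, `b = X ^ q` and `c = X ^ q²`. Then `f₅(X) = c (X + b)² / (X b)`, and since
`Y ↦ Y ^ q` is a field automorphism of order three cycling `X ↦ b ↦ c ↦ X`, raising to the
power `q²` gives `f₅(X) ^ q² = b (X + c)² / (X c)`. Multiplying,
`f₅(X) ^ (q² + 1) = ((X + b)(X + c) / X)²`, and `(X + b)(X + c) / X = X + b + c + b c / X`.
-/

section FrobeniusCycle

variable {K : Type*} [Field K]

theorem two_mul_add_mul_inv_add_mul_inv {x b c : K} (hx : x ≠ 0) (hb : b ≠ 0) :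
    2 * c + c * x * b⁻¹ + c * b * x⁻¹ = c * (x + b) ^ 2 / (x * b) := by
  field_simp
  ring

theorem map_map_mul_self_of_map_map_map_eq (σ : K →+* K) {x : K} (hσ : σ (σ (σ x)) = x)
    (hx : x ≠ 0) :
    σ (σ (2 * σ (σ x) + σ (σ x) * x * (σ x)⁻¹ + σ (σ x) * σ x * x⁻¹))
        * (2 * σ (σ x) + σ (σ x) * x * (σ x)⁻¹ + σ (σ x) * σ x * x⁻¹)
      = (x + σ x + σ (σ x) + σ (σ x) * σ x * x⁻¹) ^ 2 := by
  have hb : σ x ≠ 0 := (map_ne_zero σ).mpr hx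
  have hc : σ (σ x) ≠ 0 := (map_ne_zero σ).mpr hb
  simp only [map_add, map_mul, map_inv₀, map_ofNat, hσ]
  rw [two_mul_add_mul_inv_add_mul_inv hx hb, add_right_comm,
    two_mul_add_mul_inv_add_mul_inv hx hc]
  field_simp
  ring

end FrobeniusCycle

theorem stmt_14_general (p m : ℕ) (hp : p.Prime)
    (F : Type*) [Field F] [Fintype F] (hF : Fintype.card F = (p^m)^3)
    (f : F → F)
    (hf : ∀ x : F, f x = 2 * x^((p^m)^2) + x^((p^m)^2) * x * (x^(p^m))⁻¹
        + x^((p^m)^2) * x^(p^m) * x⁻¹) :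
    ∀ x : F, x ≠ 0 →
      (f x)^((p^m)^2 + 1)
        = (x + x^(p^m) + x^((p^m)^2) + x^((p^m)^2) * x^(p^m) * x⁻¹)^2 := by
  intro x hx
  have := Fact.mk hp
  have : CharP F p := charP_of_card_eq_prime_pow (hF.trans (pow_mul p m 3).symm)
  let σ := iterateFrobenius F p m
  have hσσ (y : F) : σ (σ y) = y ^ (p ^ m) ^ 2 := by
    simp only [σ, iterateFrobenius_def, ← pow_mul, sq]
  have hσσσ : σ (σ (σ x)) = x := by
    rw [hσσ, iterateFrobenius_def, ← pow_mul, ← pow_succ', ← hF, FiniteField.pow_card]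
  rw [pow_succ, hf, ← hσσ, ← hσσ]
  exact map_map_mul_self_of_map_map_map_eq σ hσσσ hx

theorem stmt_14 (p m : ℕ) (hp : p.Prime) (hodd : Odd p) (hm : 0 < m)
    (F : Type*) [Field F] [Fintype F] (hF : Fintype.card F = (p^m)^3)
    (f : F → F)
    (hf : ∀ x : F, f x = 2 * x^((p^m)^2) + x^((p^m)^2) * x * (x^(p^m))⁻¹
        + x^((p^m)^2) * x^(p^m) * x⁻¹) :
    ∀ x : F, x ≠ 0 →
      (f x)^((p^m)^2 + 1)
        = (x + x^(p^m) + x^((p^m)^2) + x^((p^m)^2) * x^(p^m) * x⁻¹)^2 :=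
  stmt_14_general p m hp F hF f hf
end

section
/- Let q = p^m with p an odd prime. Then f_5(X) = 2X^{q^2} + X^{q^2-q+1} + X^{q^2+q-1} is a permutation of F_{q^3} (with f_5(0) = 0 and for X ≠ 0 the negative-exponent terms interpreted via X^{-1}). -/
/-!
Write `σ` for `x ↦ x ^ q`, a field automorphism with `σ³ = 1`, and `g = f₅Root`. Off zero,
`f₅ X = σ²X (X + σX)² / (X σX)` and `g² = σ²(f₅) f₅`, so `f₅ X = f₅ Y` forces `g X = ± g Y`; the
sign `-` contradicts `f₅ σ²g = g σg`. If `g X = g Y`, then `d = σX / (X + σX) - σY / (Y + σY)`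
solves `σ²(g X) σd + (g X) d = 0`; applying `σ` twice and multiplying the three equations gives
`P = -P` with `P ≠ 0` unless `d = 0`. Then `Y / X` is fixed by `σ`, and `g` is homogeneous over
the fixed field, so `Y = X`.
-/

namespace PermF5

variable {F : Type*} [Field F] (σ : F →+* F)

def f₅ (X : F) : F :=
  2 * σ (σ X) + σ (σ X) * X * (σ X)⁻¹ + σ (σ X) * σ X * X⁻¹

def f₅Root (X : F) : F :=
  (σ (σ X) + X) * (X + σ X) / X

variable {σ}

@[simp]
theorem f₅_zero : f₅ σ 0 = 0 := by
  simp [f₅]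

theorem f₅_eq (X : F) : f₅ σ X = σ (σ X) * (X + σ X) ^ 2 / (X * σ X) := by
  rcases eq_or_ne X 0 with rfl | hX
  · simp
  have hσX : σ X ≠ 0 := (map_ne_zero σ).mpr hX
  rw [f₅]
  field_simp
  ring

theorem f₅Root_mul {c : F} (hc : σ c = c) (X : F) : f₅Root σ (c * X) = c * f₅Root σ X := by
  rcases eq_or_ne c 0 with rfl | hc0
  · simp [f₅Root]
  simp only [f₅Root, map_mul, hc]
  rw [← mul_add, ← mul_add, mul_mul_mul_comm, mul_assoc, mul_div_mul_left _ _ hc0, mul_div_assoc]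

theorem add_map_ne_zero (hσ : ∀ x, σ (σ (σ x)) = x) (h2 : (2 : F) ≠ 0) {X : F} (hX : X ≠ 0) :
    X + σ X ≠ 0 := by
  intro h
  have hneg : σ X = -X := eq_neg_of_add_eq_zero_right h
  have : X = -X := by
    calc X = σ (σ (σ X)) := (hσ X).symm
      _ = -X := by simp only [hneg, map_neg, neg_neg]
  exact hX ((mul_eq_zero.mp (show (2 : F) * X = 0 by linear_combination this)).resolve_left h2)

theorem eq_zero_of_map_map_mul_map_add_mul_eq_zero (hσ : ∀ x, σ (σ (σ x)) = x)
    (h2 : (2 : F) ≠ 0) {z d : F} (hz : z ≠ 0) (h : σ (σ z) * σ d + z * d = 0) : d = 0 := by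
  have h' : z * σ (σ d) + σ z * σ d = 0 := by
    simpa only [map_add, map_mul, map_zero, hσ] using congrArg σ h
  have h'' : σ z * d + σ (σ z) * σ (σ d) = 0 := by
    simpa only [map_add, map_mul, map_zero, hσ] using congrArg σ h'
  have hP : 2 * ((z * σ z * σ (σ z)) * (d * σ d * σ (σ d))) = 0 := by
    linear_combination (z * σ (σ d) * (σ z * d)) * h - (z * d * (σ z * d)) * h'
      + (z * d * (σ z * σ d)) * h''
  have hzσ : z * σ z * σ (σ z) ≠ 0 := by simp [hz]
  simpa using (mul_eq_zero.mp ((mul_eq_zero.mp hP).resolve_left h2)).resolve_left hzσ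

theorem f₅Root_sq (hσ : ∀ x, σ (σ (σ x)) = x) {X : F} (hX : X ≠ 0) :
    f₅Root σ X ^ 2 = σ (σ (f₅ σ X)) * f₅ σ X := by
  have hσX : σ X ≠ 0 := (map_ne_zero σ).mpr hX
  have hσσX : σ (σ X) ≠ 0 := (map_ne_zero σ).mpr hσX
  simp only [f₅_eq, f₅Root, map_div₀, map_mul, map_pow, map_add, hσ]
  field_simp

theorem f₅_mul_map_map_f₅Root (hσ : ∀ x, σ (σ (σ x)) = x) {X : F} (hX : X ≠ 0) :
    f₅ σ X * σ (σ (f₅Root σ X)) = f₅Root σ X * σ (f₅Root σ X) := by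
  have hσX : σ X ≠ 0 := (map_ne_zero σ).mpr hX
  have hσσX : σ (σ X) ≠ 0 := (map_ne_zero σ).mpr hσX
  simp only [f₅_eq, f₅Root, map_div₀, map_mul, map_add, hσ]
  field_simp

theorem map_map_f₅Root_mul_add (hσ : ∀ x, σ (σ (σ x)) = x) (h2 : (2 : F) ≠ 0) {X : F}
    (hX : X ≠ 0) :
    σ (σ (f₅Root σ X)) * σ (σ X / (X + σ X)) + f₅Root σ X * (σ X / (X + σ X)) = f₅Root σ X := by
  have hs : X + σ X ≠ 0 := add_map_ne_zero hσ h2 hX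
  have hσs : σ X + σ (σ X) ≠ 0 := by simpa only [map_add] using (map_ne_zero σ).mpr hs
  have hσσX : σ (σ X) ≠ 0 := (map_ne_zero σ).mpr ((map_ne_zero σ).mpr hX)
  simp only [f₅Root, map_div₀, map_mul, map_add, hσ]
  field_simp

theorem f₅Root_ne_zero (hσ : ∀ x, σ (σ (σ x)) = x) (h2 : (2 : F) ≠ 0) {X : F} (hX : X ≠ 0) :
    f₅Root σ X ≠ 0 := by
  have hs : X + σ X ≠ 0 := add_map_ne_zero hσ h2 hX
  have hσσs : σ (σ X) + X ≠ 0 := by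
    simpa only [map_add, hσ] using (map_ne_zero σ).mpr ((map_ne_zero σ).mpr hs)
  exact div_ne_zero (mul_ne_zero hσσs hs) hX

theorem f₅_ne_zero (hσ : ∀ x, σ (σ (σ x)) = x) (h2 : (2 : F) ≠ 0) {X : F} (hX : X ≠ 0) :
    f₅ σ X ≠ 0 := by
  have hσX : σ X ≠ 0 := (map_ne_zero σ).mpr hX
  rw [f₅_eq]
  exact div_ne_zero (mul_ne_zero ((map_ne_zero σ).mpr hσX)
    (pow_ne_zero 2 (add_map_ne_zero hσ h2 hX))) (mul_ne_zero hX hσX)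

theorem f₅Root_ne_neg (hσ : ∀ x, σ (σ (σ x)) = x) (h2 : (2 : F) ≠ 0) {X Y : F} (hX : X ≠ 0)
    (hY : Y ≠ 0) (h : f₅ σ X = f₅ σ Y) : f₅Root σ X ≠ -f₅Root σ Y := by
  intro hneg
  have hXY := f₅_mul_map_map_f₅Root hσ hX
  rw [hneg, h, map_neg, map_neg] at hXY
  have hzero : 2 * (f₅ σ Y * σ (σ (f₅Root σ Y))) = 0 := by
    linear_combination f₅_mul_map_map_f₅Root hσ hY - hXY
  have hgY := f₅Root_ne_zero hσ h2 hY
  simp [h2, f₅_ne_zero hσ h2 hY, hgY] at hzero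

theorem f₅Root_injOn (hσ : ∀ x, σ (σ (σ x)) = x) (h2 : (2 : F) ≠ 0) :
    Set.InjOn (f₅Root σ) {0}ᶜ := by
  intro X hX Y hY h
  have hd := eq_zero_of_map_map_mul_map_add_mul_eq_zero hσ h2 (f₅Root_ne_zero hσ h2 hX)
    (d := σ X / (X + σ X) - σ Y / (Y + σ Y)) (by
      have hY' := map_map_f₅Root_mul_add hσ h2 hY
      rw [← h] at hY'
      rw [map_sub]
      linear_combination map_map_f₅Root_mul_add hσ h2 hX - hY')
  have hsX := add_map_ne_zero hσ h2 hX
  have hsY := add_map_ne_zero hσ h2 hY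
  have hcross : σ X * Y = σ Y * X := by
    rw [sub_eq_zero, div_eq_div_iff hsX hsY] at hd
    linear_combination hd
  have hfix : σ (Y / X) = Y / X := by
    rw [map_div₀, div_eq_div_iff ((map_ne_zero σ).mpr hX) hX]
    linear_combination -hcross
  have hone : Y / X = 1 := by
    have hmul := f₅Root_mul hfix X
    rw [div_mul_cancel₀ Y hX, ← h] at hmul
    exact (mul_eq_right₀ (f₅Root_ne_zero hσ h2 hX)).mp hmul.symm
  exact ((div_eq_one_iff_eq hX).mp hone).symm

theorem f₅_injective (hσ : ∀ x, σ (σ (σ x)) = x) (h2 : (2 : F) ≠ 0) :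
    Function.Injective (f₅ σ) := by
  intro X Y h
  rcases eq_or_ne X 0 with rfl | hX <;> rcases eq_or_ne Y 0 with rfl | hY
  · rfl
  · exact absurd (h.symm.trans f₅_zero) (f₅_ne_zero hσ h2 hY)
  · exact absurd (h.trans f₅_zero) (f₅_ne_zero hσ h2 hX)
  have hsq : f₅Root σ X ^ 2 = f₅Root σ Y ^ 2 := by
    rw [f₅Root_sq hσ hX, f₅Root_sq hσ hY, h]
  rcases sq_eq_sq_iff_eq_or_eq_neg.mp hsq with hpos | hneg
  · exact f₅Root_injOn hσ h2 hX hY hpos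
  · exact absurd hneg (f₅Root_ne_neg hσ h2 hX hY h)

end PermF5

open PermF5 in
theorem stmt_15_general (p m : ℕ) (hp : p.Prime) (hodd : Odd p)
    (F : Type*) [Field F] [Fintype F] (hF : Fintype.card F = (p^m)^3) :
    Function.Bijective (fun x : F =>
      2 * x^((p^m)^2) + x^((p^m)^2) * x * (x^(p^m))⁻¹
        + x^((p^m)^2) * x^(p^m) * x⁻¹) := by
  have : Fact p.Prime := ⟨hp⟩
  have : CharP F p := charP_of_card_eq_prime_pow (hF.trans (pow_mul p m 3).symm)
  let σ := iterateFrobenius F p m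
  have hσ : ∀ x, σ (σ (σ x)) = x := fun x => by
    simp only [σ, iterateFrobenius_def, ← pow_mul]
    rw [← pow_three', ← hF, FiniteField.pow_card]
  have h2 : (2 : F) ≠ 0 :=
    Ring.two_ne_zero ((ringChar.eq F p).symm ▸ hodd.ne_two_of_dvd_nat (dvd_refl p))
  convert Finite.injective_iff_bijective.mp (f₅_injective hσ h2) using 2 with x
  simp only [f₅, σ, iterateFrobenius_def, ← pow_mul, sq]

theorem stmt_15 (p m : ℕ) (hp : p.Prime) (hodd : Odd p) (hm : 0 < m)
    (F : Type*) [Field F] [Fintype F] (hF : Fintype.card F = (p^m)^3) :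
    Function.Bijective (fun x : F =>
      2 * x^((p^m)^2) + x^((p^m)^2) * x * (x^(p^m))⁻¹
        + x^((p^m)^2) * x^(p^m) * x⁻¹) :=
  stmt_15_general p m hp hodd F hF
end

section
/- Let q > 2 be a prime power. There is no integer d with 1 ≤ d ≤ q^3 - 2, gcd(d, q^3-1) = 1, such that the multiset {d(q+1), d(q^2+1), d(2q^2+2q)} equals {1+q, 1+q^2, 2q+2} modulo q^3 - 1. -/
/-!
Write `x` for the residue of `d (q + 1)`. Since `q ^ 3 ≡ 1`, the other two residues on the left
are `q ^ 2 x` and `2 q x`. The numbers `1 + q`, `1 + q ^ 2`, `2 q + 2`, `q ^ 2 + q`, `2 q ^ 2 + 2`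
and `2 q ^ 2 + 2 q` all lie below `q ^ 3 - 1`, so congruences between them are equalities. Among
the three exponents, only `x = 1 + q` has `q ^ 2 x` again an exponent, and then
`2 q x = 2 q ^ 2 + 2 q` is not one.
-/

theorem ZMod.natCast_eq_natCast_iff_of_lt {n a b : ℕ} (ha : a < n) (hb : b < n) :
    (a : ZMod n) = b ↔ a = b := by
  rw [ZMod.natCast_eq_natCast_iff', Nat.mod_eq_of_lt ha, Nat.mod_eq_of_lt hb]

section

variable {q : ℕ}

def trinomialExponents (q : ℕ) : Multiset (ZMod (q ^ 3 - 1)) :=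
  {((1 + q : ℕ) : ZMod (q ^ 3 - 1)), ((1 + q ^ 2 : ℕ) : ZMod (q ^ 3 - 1)),
    ((2 * q + 2 : ℕ) : ZMod (q ^ 3 - 1))}

theorem natCast_pow_three_eq_one (hq : 0 < q) : (q : ZMod (q ^ 3 - 1)) ^ 3 = 1 := by
  rw [← Nat.cast_pow, ← Nat.sub_add_cancel (Nat.one_le_pow 3 q hq), Nat.cast_add,
    ZMod.natCast_self, Nat.cast_one, zero_add]

theorem natCast_mem_trinomialExponents_iff (hq : 1 < q) {a : ℕ} (ha : a < q ^ 3 - 1) :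
    (a : ZMod (q ^ 3 - 1)) ∈ trinomialExponents q ↔
      a = 1 + q ∨ a = 1 + q ^ 2 ∨ a = 2 * q + 2 := by
  have hq2 : 2 * q ≤ q ^ 2 := by nlinarith
  have hq3 : 2 * q ^ 2 ≤ q ^ 3 := by nlinarith
  simp only [trinomialExponents, Multiset.insert_eq_cons, Multiset.mem_cons,
    Multiset.mem_singleton]
  rw [ZMod.natCast_eq_natCast_iff_of_lt ha (by omega),
    ZMod.natCast_eq_natCast_iff_of_lt ha (by omega),
    ZMod.natCast_eq_natCast_iff_of_lt ha (by omega)]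

theorem eq_one_add_of_mem_of_sq_mul_mem (hq : 2 < q) {x : ZMod (q ^ 3 - 1)}
    (hx : x ∈ trinomialExponents q)
    (hqx : (q : ZMod (q ^ 3 - 1)) ^ 2 * x ∈ trinomialExponents q) :
    x = ((1 + q : ℕ) : ZMod (q ^ 3 - 1)) := by
  have hcube := natCast_pow_three_eq_one (q := q) (by omega)
  have hq2 : 3 * q ≤ q ^ 2 := by nlinarith
  have hq3 : 3 * q ^ 2 ≤ q ^ 3 := by nlinarith
  simp only [trinomialExponents, Multiset.insert_eq_cons, Multiset.mem_cons,
    Multiset.mem_singleton] at hx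
  rcases hx with rfl | rfl | rfl
  · rfl
  · rw [show (q : ZMod (q ^ 3 - 1)) ^ 2 * ((1 + q ^ 2 : ℕ) : ZMod (q ^ 3 - 1)) =
        ((q ^ 2 + q : ℕ) : _) by push_cast; linear_combination (q : ZMod (q ^ 3 - 1)) * hcube,
      natCast_mem_trinomialExponents_iff (by omega) (by omega)] at hqx
    omega
  · rw [show (q : ZMod (q ^ 3 - 1)) ^ 2 * ((2 * q + 2 : ℕ) : ZMod (q ^ 3 - 1)) =
        ((2 * q ^ 2 + 2 : ℕ) : _) by push_cast; linear_combination 2 * hcube,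
      natCast_mem_trinomialExponents_iff (by omega) (by omega)] at hqx
    omega

theorem two_mul_mul_one_add_notMem_trinomialExponents (hq : 2 < q) :
    2 * (q : ZMod (q ^ 3 - 1)) * ((1 + q : ℕ) : ZMod (q ^ 3 - 1)) ∉ trinomialExponents q := by
  have hq2 : 3 * q ≤ q ^ 2 := by nlinarith
  have hq3 : 3 * q ^ 2 ≤ q ^ 3 := by nlinarith
  rw [show 2 * (q : ZMod (q ^ 3 - 1)) * ((1 + q : ℕ) : ZMod (q ^ 3 - 1)) =
      ((2 * q ^ 2 + 2 * q : ℕ) : _) by push_cast; ring,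
    natCast_mem_trinomialExponents_iff (by omega) (by omega)]
  omega

end

theorem stmt_17_general (q : ℕ) (hq : 2 < q) :
    ¬ ∃ d : ℕ, 1 ≤ d ∧ d ≤ q^3 - 2 ∧ Nat.gcd d (q^3 - 1) = 1 ∧
      ({((d*(q+1) : ℕ) : ZMod (q^3 - 1)), ((d*(q^2+1) : ℕ) : ZMod (q^3 - 1)),
          ((d*(2*q^2+2*q) : ℕ) : ZMod (q^3 - 1))} : Multiset (ZMod (q^3 - 1)))
        = ({((1+q : ℕ) : ZMod (q^3 - 1)), ((1+q^2 : ℕ) : ZMod (q^3 - 1)),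
            ((2*q+2 : ℕ) : ZMod (q^3 - 1))} : Multiset (ZMod (q^3 - 1))) := by
  rintro ⟨d, -, -, -, h⟩
  set x : ZMod (q ^ 3 - 1) := ((d * (q + 1) : ℕ) : ZMod (q ^ 3 - 1))
  have hsq : ((d * (q ^ 2 + 1) : ℕ) : ZMod (q ^ 3 - 1)) = (q : ZMod (q ^ 3 - 1)) ^ 2 * x := by
    push_cast [x]
    linear_combination -(d : ZMod (q ^ 3 - 1)) * natCast_pow_three_eq_one (q := q) (by omega)
  have htwo : ((d * (2 * q ^ 2 + 2 * q) : ℕ) : ZMod (q ^ 3 - 1)) =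
      2 * (q : ZMod (q ^ 3 - 1)) * x := by
    push_cast [x]
    ring
  rw [hsq, htwo] at h
  change _ = trinomialExponents q at h
  have hmem : ∀ y ∈ ({x, (q : ZMod (q ^ 3 - 1)) ^ 2 * x, 2 * (q : ZMod (q ^ 3 - 1)) * x} :
      Multiset (ZMod (q ^ 3 - 1))), y ∈ trinomialExponents q := fun y hy => h ▸ hy
  have hx : x = ((1 + q : ℕ) : ZMod (q ^ 3 - 1)) :=
    eq_one_add_of_mem_of_sq_mul_mem hq (hmem x (by simp)) (hmem _ (by simp))
  exact two_mul_mul_one_add_notMem_trinomialExponents hq (hx ▸ hmem _ (by simp))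

theorem stmt_17 (q : ℕ) (hq : 2 < q) (hpp : ∃ p n : ℕ, p.Prime ∧ 0 < n ∧ q = p^n) :
    ¬ ∃ d : ℕ, 1 ≤ d ∧ d ≤ q^3 - 2 ∧ Nat.gcd d (q^3 - 1) = 1 ∧
      ({((d*(q+1) : ℕ) : ZMod (q^3 - 1)), ((d*(q^2+1) : ℕ) : ZMod (q^3 - 1)),
          ((d*(2*q^2+2*q) : ℕ) : ZMod (q^3 - 1))} : Multiset (ZMod (q^3 - 1)))
        = ({((1+q : ℕ) : ZMod (q^3 - 1)), ((1+q^2 : ℕ) : ZMod (q^3 - 1)),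
            ((2*q+2 : ℕ) : ZMod (q^3 - 1))} : Multiset (ZMod (q^3 - 1))) :=
  stmt_17_general q hq
end

section
/- Let q > 2 be a prime power. There is no integer d with 1 ≤ d ≤ q^3 - 2, gcd(d, q^3 - 1) = 1, such that the set {2dq^2, d(q^2-q+1), d(q^2+q-1)} equals {2, q+1, q^2+1} modulo q^3 - 1. -/
/-!
Since `d(q² - q + 1) + d(q² + q - 1) = 2dq²`, the three exponents on the left sum to twice
`2dq²`. If the multisets agree, `2dq²` is one of `2, q + 1, q² + 1`, and then that element is
the sum of the other two modulo `q³ - 1`. For `q ≥ 3` each of the three resulting congruences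
compares two distinct naturals below `q³ - 1`, which is impossible.
-/

theorem Multiset.eq_add_of_triple_eq {M : Type*} [AddCancelCommMonoid M] {a b c x y z : M}
    (h : ({a, b, c} : Multiset M) = {x, y, z}) (habc : b + c = a) :
    x = y + z ∨ y = x + z ∨ z = x + y := by
  have hsum : a + a = x + (y + z) := by
    simpa [← habc, add_assoc] using congrArg Multiset.sum h
  have hmem : a ∈ ({x, y, z} : Multiset M) := h ▸ Multiset.mem_cons_self a _
  simp only [Multiset.insert_eq_cons, Multiset.mem_cons, Multiset.mem_singleton] at hmem
  rcases hmem with rfl | rfl | rfl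
  · exact Or.inl (add_left_cancel hsum)
  · exact Or.inr (Or.inl (add_left_cancel (hsum.trans (add_left_comm _ _ _))))
  · exact Or.inr (Or.inr (add_left_cancel (hsum.trans (by abel))))

theorem ZMod.natCast_ne_natCast_of_lt {n a b : ℕ} (ha : a < n) (hb : b < n) (hab : a ≠ b) :
    (a : ZMod n) ≠ b :=
  fun h => hab (((ZMod.natCast_eq_natCast_iff a b n).mp h).eq_of_lt_of_lt ha hb)

theorem stmt_18_general (q : ℕ) (hq : 2 < q) :
    ¬ ∃ d : ℕ, 1 ≤ d ∧ d ≤ q^3 - 2 ∧ Nat.gcd d (q^3 - 1) = 1 ∧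
      ({((2*d*q^2 : ℕ) : ZMod (q^3 - 1)), ((d*(q^2 - q + 1) : ℕ) : ZMod (q^3 - 1)),
          ((d*(q^2 + q - 1) : ℕ) : ZMod (q^3 - 1))} : Multiset (ZMod (q^3 - 1)))
        = ({((2 : ℕ) : ZMod (q^3 - 1)), ((q+1 : ℕ) : ZMod (q^3 - 1)),
            ((q^2+1 : ℕ) : ZMod (q^3 - 1))} : Multiset (ZMod (q^3 - 1))) := by
  rintro ⟨d, -, -, -, heq⟩
  have hq2 : 3 * q ≤ q ^ 2 := by nlinarith
  have hq3 : q ^ 2 + q + 3 < q ^ 3 := by nlinarith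
  have hsum : ((d * (q^2 - q + 1) : ℕ) : ZMod (q^3 - 1))
      + ((d * (q^2 + q - 1) : ℕ) : ZMod (q^3 - 1)) = ((2 * d * q^2 : ℕ) : ZMod (q^3 - 1)) := by
    rw [← Nat.cast_add, ← Nat.mul_add, show q^2 - q + 1 + (q^2 + q - 1) = 2 * q^2 by omega]
    push_cast
    ring
  rcases Multiset.eq_add_of_triple_eq heq hsum with h | h | h <;> rw [← Nat.cast_add] at h <;>
    exact ZMod.natCast_ne_natCast_of_lt (by omega) (by omega) (by omega) h

theorem stmt_18 (q : ℕ) (hq : 2 < q) (hpp : ∃ p n : ℕ, p.Prime ∧ 0 < n ∧ q = p^n) :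
    ¬ ∃ d : ℕ, 1 ≤ d ∧ d ≤ q^3 - 2 ∧ Nat.gcd d (q^3 - 1) = 1 ∧
      ({((2*d*q^2 : ℕ) : ZMod (q^3 - 1)), ((d*(q^2 - q + 1) : ℕ) : ZMod (q^3 - 1)),
          ((d*(q^2 + q - 1) : ℕ) : ZMod (q^3 - 1))} : Multiset (ZMod (q^3 - 1)))
        = ({((2 : ℕ) : ZMod (q^3 - 1)), ((q+1 : ℕ) : ZMod (q^3 - 1)),
            ((q^2+1 : ℕ) : ZMod (q^3 - 1))} : Multiset (ZMod (q^3 - 1))) :=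
  stmt_18_general q hq
end

section
/- Let q = 2^m. For every A ∈ F_q (the subfield of F_{q^3}), the equation X^{2q^2} + aX^{q^2+q-1} + aX^{q^2-q+1} = A with a ∈ F_q nonzero has the unique solution X = A^{1/2} in F_{q^3}, where A^{1/2} is the unique square root of A. -/
/-!
Let `φ` be the `q`-Frobenius, an automorphism of order dividing `3`. If `x` lies in the fixed
field of `φ`, the two `a`-terms coincide and cancel in characteristic `2`, leaving `x ^ 2 = A`.
Otherwise `x`, `φ x`, `φ² x` are pairwise distinct, and clearing denominators shows that `φ² x`
is a root of `a t⁴ + (a s² + e) t² + A e`, where `s` and `e` are the trace and the norm of `x`.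
These coefficients are `φ`-invariant, so all three conjugates are roots. But in characteristic `2`
any two distinct roots `u`, `v` of `a t⁴ + c t² + d` satisfy `a (u + v)² = c`, which pins down
`u + v`; so there is no third root.
-/

section CharTwo

variable {F : Type*} [Field F] [CharP F 2]

theorem biquadratic_eq_zero_of_eq {a A x y z : F} (hx : x ≠ 0) (hy : y ≠ 0)
    (h : z ^ 2 + a * (z * y * x⁻¹) + a * (z * x * y⁻¹) = A) :
    a * z ^ 4 + (a * (x + y + z) ^ 2 + x * y * z) * z ^ 2 + A * (x * y * z) = 0 := by
  field_simp at h
  linear_combination z * h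
    + (a * z ^ 2 * (z ^ 2 + x * y + x * z + y * z) + A * x * y * z) * CharTwo.two_eq_zero (R := F)

theorem mul_add_sq_eq_of_biquadratic_roots {a c d u v : F} (huv : u ≠ v)
    (hu : a * u ^ 4 + c * u ^ 2 + d = 0) (hv : a * v ^ 4 + c * v ^ 2 + d = 0) :
    a * (u + v) ^ 2 = c := by
  have h : (u + v) ^ 2 * (a * (u + v) ^ 2 + c) = 0 := by
    linear_combination hu + hv
      + (a * (2 * u ^ 3 * v + 3 * u ^ 2 * v ^ 2 + 2 * u * v ^ 3) + c * u * v - d)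
        * CharTwo.two_eq_zero (R := F)
  have huv' : (u + v) ^ 2 ≠ 0 := pow_ne_zero 2 (mt CharTwo.add_eq_zero.mp huv)
  rw [← CharTwo.add_eq_zero]
  exact (mul_eq_zero.mp h).resolve_left huv'

theorem eq_of_biquadratic_roots {a c d u v w : F} (ha : a ≠ 0)
    (hu : a * u ^ 4 + c * u ^ 2 + d = 0) (hv : a * v ^ 4 + c * v ^ 2 + d = 0)
    (hw : a * w ^ 4 + c * w ^ 2 + d = 0) (huv : u ≠ v) (huw : u ≠ w) : v = w := by
  have h := (mul_add_sq_eq_of_biquadratic_roots huv hu hv).trans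
    (mul_add_sq_eq_of_biquadratic_roots huw hu hw).symm
  exact add_left_cancel (CharTwo.sq_injective (mul_left_cancel₀ ha h))

end CharTwo

theorem biquadratic_map_eq_zero {R : Type*} [CommRing R] (φ : R →+* R) {a c d z : R}
    (ha : φ a = a) (hc : φ c = c) (hd : φ d = d) (h : a * z ^ 4 + c * z ^ 2 + d = 0) :
    a * φ z ^ 4 + c * φ z ^ 2 + d = 0 := by
  simpa [ha, hc, hd] using congrArg φ h

section FrobeniusOrderThree

variable {F : Type*} [Field F] [CharP F 2] (φ : F →+* F) (hφ : ∀ x, φ (φ (φ x)) = x)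
  {a A : F}
include hφ

theorem sq_add_mul_ne_of_apply_ne (ha0 : a ≠ 0) (ha : φ a = a) (hA : φ A = A) {x : F}
    (hx : φ x ≠ x) :
    φ (φ x) ^ 2 + a * (φ (φ x) * φ x * x⁻¹) + a * (φ (φ x) * x * (φ x)⁻¹) ≠ A := by
  intro h
  set y := φ x with hy
  set z := φ y with hz
  have hzx : z ≠ x := fun h => hx (by simpa [hz, hy, hφ] using (congrArg φ h).symm)
  have hzy : z ≠ y := fun h => hx (φ.injective h)
  have hx0 : x ≠ 0 := by rintro rfl; exact hx (map_zero φ)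
  have hy0 : y ≠ 0 := (map_ne_zero φ).mpr hx0
  have hs : φ (x + y + z) = x + y + z := by simp only [map_add, hz, hy, hφ]; ring
  have he : φ (x * y * z) = x * y * z := by simp only [map_mul, hz, hy, hφ]; ring
  have hc : φ (a * (x + y + z) ^ 2 + x * y * z) = a * (x + y + z) ^ 2 + x * y * z := by
    simp only [map_add, map_mul, map_pow, ha, hs, he]
  have hd : φ (A * (x * y * z)) = A * (x * y * z) := by rw [map_mul, hA, he]
  have hz_root := biquadratic_eq_zero_of_eq hx0 hy0 h
  have hx_root := biquadratic_map_eq_zero φ ha hc hd hz_root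
  rw [hz, hy, hφ] at hx_root
  have hy_root := biquadratic_map_eq_zero φ ha hc hd hx_root
  exact hx (eq_of_biquadratic_roots ha0 hz_root hy_root hx_root hzy hzx)

theorem sq_add_mul_eq_iff_sq_eq (ha0 : a ≠ 0) (ha : φ a = a) (hA : φ A = A) (x : F) :
    φ (φ x) ^ 2 + a * (φ (φ x) * φ x * x⁻¹) + a * (φ (φ x) * x * (φ x)⁻¹) = A ↔
      x ^ 2 = A := by
  by_cases hx : φ x = x
  · rw [hx, hx, add_assoc, CharTwo.add_self_eq_zero, add_zero]
  · refine iff_of_false (sq_add_mul_ne_of_apply_ne φ hφ ha0 ha hA hx) fun h => hx ?_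
    exact CharTwo.sq_injective (show φ x ^ 2 = x ^ 2 by rw [← map_pow, h, hA])

end FrobeniusOrderThree

theorem stmt_19_general (m : ℕ) (F : Type*) [Field F] [Fintype F]
    (hF : Fintype.card F = (2^m)^3)
    (a : F) (haq : a^(2^m) = a) (ha0 : a ≠ 0)
    (A : F) (hA : A^(2^m) = A) :
    ∀ x : F,
      x^(2*(2^m)^2) + a * (x^((2^m)^2) * x^(2^m) * x⁻¹)
          + a * (x^((2^m)^2) * x * (x^(2^m))⁻¹) = A
        ↔ x^2 = A := by
  have : Fact (Nat.Prime 2) := ⟨Nat.prime_two⟩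
  have : CharP F 2 := charP_of_card_eq_prime_pow (hF.trans (pow_mul 2 m 3).symm)
  have hφ2 (x : F) : iterateFrobenius F 2 m (iterateFrobenius F 2 m x) = x ^ (2 ^ m) ^ 2 := by
    simp only [iterateFrobenius_def, ← pow_mul, sq]
  have hφ3 (x : F) : iterateFrobenius F 2 m (iterateFrobenius F 2 m (iterateFrobenius F 2 m x))
      = x := by
    rw [hφ2, iterateFrobenius_def, ← pow_mul, ← pow_succ', ← hF, FiniteField.pow_card]
  intro x
  have key := sq_add_mul_eq_iff_sq_eq (iterateFrobenius F 2 m) hφ3 ha0 haq hA x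
  rwa [hφ2, iterateFrobenius_def, ← pow_mul'] at key

theorem stmt_19 (m : ℕ) (hm : 0 < m) (F : Type*) [Field F] [Fintype F]
    (hF : Fintype.card F = (2^m)^3)
    (a : F) (haq : a^(2^m) = a) (ha0 : a ≠ 0)
    (A : F) (hA : A^(2^m) = A) :
    ∀ x : F,
      x^(2*(2^m)^2) + a * (x^((2^m)^2) * x^(2^m) * x⁻¹)
          + a * (x^((2^m)^2) * x * (x^(2^m))⁻¹) = A
        ↔ x^2 = A :=
  stmt_19_general m F hF a haq ha0 A hA
end
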